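/- Let D be an F-division algebra with involution ϑ, ℓ ≥ 1, and 𝒫 a prepositive cone on (M_ℓ(D),ϑ^t). For d ∈ Sym(D,ϑ) invertible, the following are equivalent: (1) d = tr(B) for some B ∈ 𝒫; (2) d = ϑ(X)^t B X for some B ∈ 𝒫 and X ∈ D^ℓ; (3) diag(d, d_2, …, d_ℓ) ∈ 𝒫 for some d_2,…,d_ℓ ∈ Sym(D,ϑ); (4) diag(d, 0, …, 0) ∈ 𝒫. -/

import Mathlib

/-!
Congruence of `B` by the matrix whose only nonzero column is `X`, placed in position `j`,
compresses `B` to the `1 × 1` block `ϑ(X)ᵗ B X` at `(j, j)`. Hence (2) gives (4) by the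
congruence axiom, (3) gives (4) with `X = e₁`, and (1) gives (4) by adding the compressions
of `B` at the standard basis vectors `eᵢ`, whose values are the diagonal entries `B i i`.
The converse implications are witnessed by `diag(d, 0, …, 0)` itself.
-/

open Pointwise

/-- An ordering on a field `F`. -/
def IsOrdering {F : Type*} [Field F] (P : Set F) : Prop :=
  (∀ x ∈ P, ∀ y ∈ P, x + y ∈ P) ∧ (∀ x ∈ P, ∀ y ∈ P, x * y ∈ P) ∧
  (∀ x : F, x ∈ P ∨ -x ∈ P) ∧ (∀ x ∈ P, -x ∈ P → x = 0)

/-- A prepositive cone on an `F`-algebra with involution `(A, star)`: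
a subset of the symmetric elements which is nonempty, closed under addition,
closed under `p ↦ star x * p * x`, whose set of preserving scalars is an ordering
of `F`, and which is proper (`PC ∩ -PC = {0}`). -/
def IsPrepositiveCone (F : Type*) {A : Type*} [Field F] [Ring A] [Algebra F A] [StarRing A]
    (PC : Set A) : Prop :=
  (∀ a ∈ PC, star a = a) ∧ PC.Nonempty ∧ (∀ a ∈ PC, ∀ b ∈ PC, a + b ∈ PC) ∧
  (∀ x : A, ∀ p ∈ PC, star x * p * x ∈ PC) ∧
  IsOrdering {u : F | ∀ p ∈ PC, u • p ∈ PC} ∧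
  (∀ a ∈ PC, -a ∈ PC → a = 0)

/-- A prepositive cone over the ordering `P` of `F`. -/
def IsPrepositiveConeOver (F : Type*) {A : Type*} [Field F] [Ring A] [Algebra F A] [StarRing A]
    (P : Set F) (PC : Set A) : Prop :=
  IsPrepositiveCone F PC ∧ {u : F | ∀ p ∈ PC, u • p ∈ PC} = P


namespace Matrix

variable {n R : Type*} [Fintype n] [DecidableEq n] [Semiring R] [StarRing R]

/-- `vecMulVec X (Pi.single j 1)` is the matrix whose `j`-th column is `X`, all others zero. -/
theorem star_vecMulVec_single_mul_mul (B : Matrix n n R) (X : n → R) (j : n) :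
    star (vecMulVec X (Pi.single j 1)) * B * vecMulVec X (Pi.single j 1) =
      single j j (star X ⬝ᵥ B *ᵥ X) := by
  rw [star_eq_conjTranspose, conjTranspose_vecMulVec, vecMulVec_mul, vecMulVec_mul_vecMulVec,
    ← dotProduct_mulVec]
  ext k l
  rcases eq_or_ne k j with rfl | hk
  · rcases eq_or_ne l k with rfl | hl
    · simp [vecMulVec_apply]
    · simp [vecMulVec_apply, hl, hl.symm]
  · simp [vecMulVec_apply, hk, hk.symm]

omit [DecidableEq n] in
theorem star_dotProduct_mulVec_eq_sum (B : Matrix n n R) (X : n → R) :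
    star X ⬝ᵥ B *ᵥ X = ∑ i, ∑ j, star (X i) * B i j * X j := by
  simp only [dotProduct, mulVec, Pi.star_apply, Finset.mul_sum, mul_assoc]

end Matrix

namespace IsPrepositiveCone

section

variable {F A : Type*} [Field F] [Ring A] [Algebra F A] [StarRing A] {PC : Set A}

theorem star_mul_mul_mem (hPC : IsPrepositiveCone F PC) (x : A) {p : A} (hp : p ∈ PC) :
    star x * p * x ∈ PC :=
  hPC.2.2.2.1 x p hp

theorem zero_mem (hPC : IsPrepositiveCone F PC) : (0 : A) ∈ PC := by
  obtain ⟨p, hp⟩ := hPC.2.1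
  simpa using hPC.star_mul_mul_mem 0 hp

def toAddSubmonoid (hPC : IsPrepositiveCone F PC) : AddSubmonoid A where
  carrier := PC
  add_mem' ha hb := hPC.2.2.1 _ ha _ hb
  zero_mem' := hPC.zero_mem

end

section Matrix

open Matrix

variable {F n R : Type*} [Field F] [Fintype n] [DecidableEq n] [Ring R] [StarRing R]
  [Algebra F R] {PC : Set (Matrix n n R)}

theorem single_star_dotProduct_mulVec_mem (hPC : IsPrepositiveCone F PC) {B : Matrix n n R}
    (hB : B ∈ PC) (X : n → R) (j : n) : single j j (star X ⬝ᵥ B *ᵥ X) ∈ PC := by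
  rw [← star_vecMulVec_single_mul_mul]
  exact hPC.star_mul_mul_mem _ hB

theorem single_diag_mem (hPC : IsPrepositiveCone F PC) {B : Matrix n n R} (hB : B ∈ PC)
    (i j : n) : single j j (B i i) ∈ PC := by
  simpa using hPC.single_star_dotProduct_mulVec_mem hB (Pi.single i 1) j

theorem single_trace_mem (hPC : IsPrepositiveCone F PC) {B : Matrix n n R} (hB : B ∈ PC)
    (j : n) : single j j (trace B) ∈ PC := by
  have hsum : single j j (trace B) = ∑ i, single j j (B i i) :=
    map_sum (singleAddMonoidHom j j) _ _
  rw [hsum]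
  exact hPC.toAddSubmonoid.sum_mem fun i _ => hPC.single_diag_mem hB i j

end Matrix

end IsPrepositiveCone

theorem stmt_9_general {F D : Type*} [Field F] [DivisionRing D] [Algebra F D] [StarRing D]
    (n : ℕ)
    (PC : Set (Matrix (Fin (n + 1)) (Fin (n + 1)) D)) (hPC : IsPrepositiveCone F PC)
    (d : D) (hd : star d = d) :
    List.TFAE
      [ ∃ B ∈ PC, Matrix.trace B = d,
        ∃ B ∈ PC, ∃ X : Fin (n + 1) → D, (∑ i, ∑ j, star (X i) * B i j * X j) = d,
        ∃ v : Fin (n + 1) → D, v 0 = d ∧ (∀ i, star (v i) = v i) ∧ Matrix.diagonal v ∈ PC,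
        Matrix.diagonal (Pi.single (0 : Fin (n + 1)) d) ∈ PC ] := by
  simp only [Matrix.diagonal_single]
  tfae_have 1 → 4 := fun ⟨B, hB, hBd⟩ => hBd ▸ hPC.single_trace_mem hB 0
  tfae_have 4 → 1 := fun h => ⟨_, h, by simp⟩
  tfae_have 2 → 4 := fun ⟨B, hB, X, hX⟩ => by
    rw [← hX, ← Matrix.star_dotProduct_mulVec_eq_sum]
    exact hPC.single_star_dotProduct_mulVec_mem hB X 0
  tfae_have 4 → 2 := fun h => ⟨_, h, Pi.single 0 1, by
    rw [← Matrix.star_dotProduct_mulVec_eq_sum]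
    simp⟩
  tfae_have 3 → 4 := fun ⟨v, hv0, _, hv⟩ => by
    simpa [hv0] using hPC.single_diag_mem hv 0 0
  tfae_have 4 → 3 := fun h => by
    refine ⟨Pi.single 0 d, by simp, fun i => ?_, by rwa [Matrix.diagonal_single]⟩
    rcases eq_or_ne i 0 with rfl | hi
    · simpa using hd
    · simp [hi]
  tfae_finish

/-- Characterization of the elements of `Tr_ℓ(PC)` for a prepositive cone `PC` on
`(M_ℓ(D), ϑ^t)`, `ℓ = n+1 ≥ 1`: for an invertible symmetric `d ∈ D`, the conditions
(1) `d` is the trace of an element of `PC`, (2) `d = ϑ(X)^t B X` for some `B ∈ PC` and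
`X ∈ D^ℓ`, (3) `diag(d, d₂, …, d_ℓ) ∈ PC` for some symmetric `d₂, …, d_ℓ`,
(4) `diag(d, 0, …, 0) ∈ PC`, are equivalent. -/
theorem stmt_9 {F D : Type*} [Field F] [DivisionRing D] [Algebra F D] [StarRing D]
    [FiniteDimensional F D] (h2 : (2 : F) ≠ 0)
    (hstar : ∀ c : F, star (algebraMap F D c) = algebraMap F D c)
    (n : ℕ)
    (PC : Set (Matrix (Fin (n + 1)) (Fin (n + 1)) D)) (hPC : IsPrepositiveCone F PC)
    (d : D) (hd : star d = d) (hdu : IsUnit d) :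
    List.TFAE
      [ ∃ B ∈ PC, Matrix.trace B = d,
        ∃ B ∈ PC, ∃ X : Fin (n + 1) → D, (∑ i, ∑ j, star (X i) * B i j * X j) = d,
        ∃ v : Fin (n + 1) → D, v 0 = d ∧ (∀ i, star (v i) = v i) ∧ Matrix.diagonal v ∈ PC,
        Matrix.diagonal (Pi.single (0 : Fin (n + 1)) d) ∈ PC ] :=
  stmt_9_general n PC hPC d hd
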